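/- arXiv:math/0702189 — 3 statements merged into one kernel-verified Lean document; each statement's English description precedes it below -/
import Mathlib

section
/- In the setting of the meeting-invariant rules, there exists exactly one function m : ℤ^r × ℤ^r → ℚ satisfying rules (i), (ii), (iii) and (iv). (This is the paper's claim that the meeting invariants m_{β_1,β_2}, which virtually enumerate rational curves of class β_1 meeting rational curves of class β_2, are uniquely determined by the rules (i)–(iv).) -/
/-- An effective (nonzero) curve class: a nonzero vector in `ℕ^r ⊂ ℤ^r`. -/
def Eff {r : ℕ} (β : Fin r → ℤ) : Prop := (∀ i, 0 ≤ β i) ∧ β ≠ 0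

namespace Meeting

variable {r : ℕ}

def deg (β : Fin r → ℤ) : ℕ := ∑ i, (β i).toNat

lemma deg_pos {β : Fin r → ℤ} (h : Eff β) : 1 ≤ deg β := by
  obtain ⟨hnn, hne⟩ := h
  obtain ⟨i, hi⟩ := Function.ne_iff.mp hne
  have h1 : 1 ≤ (β i).toNat := by
    have := hnn i; simp only [Pi.zero_apply] at hi; omega
  calc 1 ≤ (β i).toNat := h1
    _ ≤ deg β := Finset.single_le_sum (f := fun j => (β j).toNat) (fun _ _ => Nat.zero_le _) (Finset.mem_univ i)

lemma deg_split {a b : Fin r → ℤ} (ha : Eff a) (hb : Eff (b - a)) :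
    deg a + deg (b - a) = deg b := by
  unfold deg
  rw [← Finset.sum_add_distrib]
  refine Finset.sum_congr rfl fun i _ => ?_
  have h1 := ha.1 i
  have h2 := hb.1 i
  simp only [Pi.sub_apply, Pi.zero_apply] at *
  omega

open Classical in
noncomputable def mdef (S : (Fin r → ℤ) → (Fin r → ℤ) → ℚ) (c : (Fin r → ℤ) → ℚ)
    (β₁ β₂ : Fin r → ℤ) : ℚ :=
  if h : Eff β₁ ∧ Eff β₂ then
    if heq : β₁ = β₂ then
      c β₁ + S β₁ β₁ -
        ∑ q ∈ Finset.Icc 0 β₁,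
          if hq : Eff q ∧ Eff (β₁ - q) then mdef S c q (β₁ - q) else 0
    else
      S β₁ β₂ + (if h1 : Eff (β₂ - β₁) then mdef S c β₁ (β₂ - β₁) else 0)
        + (if h2 : Eff (β₁ - β₂) then mdef S c (β₁ - β₂) β₂ else 0)
  else 0
termination_by deg β₁ + deg β₂
decreasing_by
  · have e := deg_split hq.1 hq.2
    have p1 := deg_pos h.1
    have p2 := deg_pos h.2
    omega
  · have e := deg_split h.1 h1
    have p1 := deg_pos h.1
    omega
  · have e := deg_split h.2 h2
    have p2 := deg_pos h.2
    omega

lemma mem_Icc_of_split {β q : Fin r → ℤ} (h1 : Eff q) (h2 : Eff (β - q)) :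
    q ∈ Finset.Icc 0 β := by
  rw [Finset.mem_Icc, Pi.le_def, Pi.le_def]
  constructor
  · intro i; exact h1.1 i
  · intro i; have := h2.1 i; simp only [Pi.sub_apply] at this; omega

open Classical in
lemma finsum_pairs (β : Fin r → ℤ) (f : (Fin r → ℤ) → (Fin r → ℤ) → ℚ) :
    (∑ᶠ (p : (Fin r → ℤ) × (Fin r → ℤ)) (_ : Eff p.1 ∧ Eff p.2 ∧ p.1 + p.2 = β), f p.1 p.2)
    = ∑ q ∈ Finset.Icc 0 β, if Eff q ∧ Eff (β - q) then f q (β - q) else 0 := by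
  set T : Finset (Fin r → ℤ) :=
    (Finset.Icc 0 β).filter (fun q => Eff q ∧ Eff (β - q)) with hT
  have hset : {p : (Fin r → ℤ) × (Fin r → ℤ) | Eff p.1 ∧ Eff p.2 ∧ p.1 + p.2 = β}
      = (fun q => (q, β - q)) '' ↑T := by
    ext p
    simp only [Set.mem_setOf_eq, Set.mem_image, Finset.coe_filter, Set.mem_setOf_eq,
      Finset.mem_coe, hT, Finset.mem_filter]
    constructor
    · rintro ⟨hp1, hp2, hpsum⟩
      have hps : p.2 = β - p.1 := by rw [← hpsum]; ring
      refine ⟨p.1, ⟨mem_Icc_of_split hp1 (hps ▸ hp2), hp1, hps ▸ hp2⟩, ?_⟩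
      rw [← hps]
    · rintro ⟨q, ⟨_, hq1, hq2⟩, rfl⟩
      exact ⟨hq1, hq2, by ring⟩
  have hinj : Set.InjOn (fun q : Fin r → ℤ => (q, β - q)) ↑T := by
    intro x _ y _ hxy
    exact congrArg Prod.fst hxy
  calc (∑ᶠ (p : (Fin r → ℤ) × (Fin r → ℤ)) (_ : Eff p.1 ∧ Eff p.2 ∧ p.1 + p.2 = β), f p.1 p.2)
      = ∑ᶠ p ∈ (fun q => (q, β - q)) '' (↑T : Set (Fin r → ℤ)), f p.1 p.2 := by
        rw [← hset]; rfl
    _ = ∑ᶠ q ∈ (↑T : Set (Fin r → ℤ)), f q (β - q) := by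
        rw [finsum_mem_image hinj]
    _ = ∑ q ∈ T, f q (β - q) := finsum_mem_coe_finset _ _
    _ = ∑ q ∈ Finset.Icc 0 β, if Eff q ∧ Eff (β - q) then f q (β - q) else 0 := by
        rw [hT, Finset.sum_filter]

variable {S : (Fin r → ℤ) → (Fin r → ℤ) → ℚ} {c : (Fin r → ℤ) → ℚ}

lemma mdef_rule2 (β₁ β₂ : Fin r → ℤ) (h : ¬ (Eff β₁ ∧ Eff β₂)) :
    mdef S c β₁ β₂ = 0 := by
  rw [mdef, dif_neg h]

lemma mdef_rule3 (β₁ β₂ : Fin r → ℤ) (h1 : Eff β₁) (h2 : Eff β₂) (hne : β₁ ≠ β₂) :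
    mdef S c β₁ β₂ = S β₁ β₂ + mdef S c β₁ (β₂ - β₁) + mdef S c (β₁ - β₂) β₂ := by
  rw [mdef, dif_pos ⟨h1, h2⟩, dif_neg hne]
  congr 1
  · congr 1
    by_cases hE : Eff (β₂ - β₁)
    · rw [dif_pos hE]
    · rw [dif_neg hE, mdef_rule2 _ _ (fun hh => hE hh.2)]
  · by_cases hE : Eff (β₁ - β₂)
    · rw [dif_pos hE]
    · rw [dif_neg hE, mdef_rule2 _ _ (fun hh => hE hh.1)]

open Classical in
lemma mdef_rule4 (β : Fin r → ℤ) (h : Eff β) :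
    mdef S c β β = c β + S β β -
      ∑ᶠ (p : (Fin r → ℤ) × (Fin r → ℤ)) (_ : Eff p.1 ∧ Eff p.2 ∧ p.1 + p.2 = β),
        mdef S c p.1 p.2 := by
  rw [mdef, dif_pos ⟨h, h⟩, dif_pos rfl, finsum_pairs]
  congr 1

lemma mdef_symm (hS : ∀ a b, S a b = S b a) (a b : Fin r → ℤ) :
    mdef S c a b = mdef S c b a := by
  suffices h : ∀ N a b, deg a + deg b = N → mdef S c a b = mdef S c b a from
    h _ a b rfl
  intro N
  induction N using Nat.strong_induction_on with
  | _ N IH =>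
    intro a b hN
    by_cases hE : Eff a ∧ Eff b
    · by_cases hab : a = b
      · rw [hab]
      · have hab' : b ≠ a := fun hh => hab hh.symm
        rw [mdef_rule3 a b hE.1 hE.2 hab, mdef_rule3 b a hE.2 hE.1 hab', hS a b]
        have e1 : mdef S c a (b - a) = mdef S c (b - a) a := by
          by_cases hE2 : Eff (b - a)
          · refine IH (deg a + deg (b - a)) ?_ a (b - a) rfl
            have := deg_split hE.1 hE2
            have := deg_pos hE.1
            omega
          · rw [mdef_rule2 _ _ (fun hh => hE2 hh.2), mdef_rule2 _ _ (fun hh => hE2 hh.1)]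
        have e2 : mdef S c (a - b) b = mdef S c b (a - b) := by
          by_cases hE2 : Eff (a - b)
          · refine IH (deg (a - b) + deg b) ?_ (a - b) b rfl
            have := deg_split hE.2 hE2
            have := deg_pos hE.2
            omega
          · rw [mdef_rule2 _ _ (fun hh => hE2 hh.1), mdef_rule2 _ _ (fun hh => hE2 hh.2)]
        rw [e1, e2]; ring
    · have hE' : ¬ (Eff b ∧ Eff a) := fun hh => hE ⟨hh.2, hh.1⟩
      rw [mdef_rule2 _ _ hE, mdef_rule2 _ _ hE']

lemma rules_unique (S : (Fin r → ℤ) → (Fin r → ℤ) → ℚ) (c : (Fin r → ℤ) → ℚ)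
    (m m' : (Fin r → ℤ) → (Fin r → ℤ) → ℚ)
    (h2 : ∀ β₁ β₂, ¬ (Eff β₁ ∧ Eff β₂) → m β₁ β₂ = 0)
    (h3 : ∀ β₁ β₂, Eff β₁ → Eff β₂ → β₁ ≠ β₂ →
        m β₁ β₂ = S β₁ β₂ + m β₁ (β₂ - β₁) + m (β₁ - β₂) β₂)
    (h4 : ∀ β, Eff β → m β β = c β + S β β -
        ∑ᶠ (p : (Fin r → ℤ) × (Fin r → ℤ)) (_ : Eff p.1 ∧ Eff p.2 ∧ p.1 + p.2 = β),
          m p.1 p.2)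
    (h2' : ∀ β₁ β₂, ¬ (Eff β₁ ∧ Eff β₂) → m' β₁ β₂ = 0)
    (h3' : ∀ β₁ β₂, Eff β₁ → Eff β₂ → β₁ ≠ β₂ →
        m' β₁ β₂ = S β₁ β₂ + m' β₁ (β₂ - β₁) + m' (β₁ - β₂) β₂)
    (h4' : ∀ β, Eff β → m' β β = c β + S β β -
        ∑ᶠ (p : (Fin r → ℤ) × (Fin r → ℤ)) (_ : Eff p.1 ∧ Eff p.2 ∧ p.1 + p.2 = β),
          m' p.1 p.2) :
    m = m' := by
  classical
  suffices h : ∀ N a b, deg a + deg b = N → m a b = m' a b by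
    funext a b; exact h _ a b rfl
  intro N
  induction N using Nat.strong_induction_on with
  | _ N IH =>
    intro a b hN
    by_cases hE : Eff a ∧ Eff b
    · by_cases hab : a = b
      · subst hab
        rw [h4 a hE.1, h4' a hE.1, finsum_pairs, finsum_pairs]
        congr 1
        refine Finset.sum_congr rfl fun q _ => ?_
        by_cases hq : Eff q ∧ Eff (a - q)
        · rw [if_pos hq, if_pos hq]
          refine IH (deg q + deg (a - q)) ?_ q (a - q) rfl
          have := deg_split hq.1 hq.2
          have := deg_pos hE.1
          omega
        · rw [if_neg hq, if_neg hq]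
      · rw [h3 a b hE.1 hE.2 hab, h3' a b hE.1 hE.2 hab]
        have e1 : m a (b - a) = m' a (b - a) := by
          by_cases hE2 : Eff (b - a)
          · refine IH (deg a + deg (b - a)) ?_ a (b - a) rfl
            have := deg_split hE.1 hE2
            have := deg_pos hE.1
            omega
          · rw [h2 _ _ (fun hh => hE2 hh.2), h2' _ _ (fun hh => hE2 hh.2)]
        have e2 : m (a - b) b = m' (a - b) b := by
          by_cases hE2 : Eff (a - b)
          · refine IH (deg (a - b) + deg b) ?_ (a - b) b rfl
            have := deg_split hE.2 hE2
            have := deg_pos hE.2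
            omega
          · rw [h2 _ _ (fun hh => hE2 hh.1), h2' _ _ (fun hh => hE2 hh.1)]
        rw [e1, e2]
    · rw [h2 _ _ hE, h2' _ _ hE]

end Meeting

/-- there is exactly one function `m : ℤ^r × ℤ^r → ℚ` satisfying the
meeting-invariant rules (i)-(iv). -/
theorem stmt_4 (r s : ℕ) (hr : 1 ≤ r) (hs : 1 ≤ s)
    (g : Fin s → Fin s → ℚ) (hg : ∀ i j, g i j = g j i)
    (n : Fin s → (Fin r → ℤ) → ℚ) (c : (Fin r → ℤ) → ℚ)
    (hn : ∀ i β, ¬ Eff β → n i β = 0)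
    (hc : ∀ β, ¬ Eff β → c β = 0) :
    ∃! m : (Fin r → ℤ) → (Fin r → ℤ) → ℚ,
      -- rule (i)
      (∀ β₁ β₂, m β₁ β₂ = m β₂ β₁) ∧
      -- rule (ii)
      (∀ β₁ β₂, ¬ (Eff β₁ ∧ Eff β₂) → m β₁ β₂ = 0) ∧
      -- rule (iii)
      (∀ β₁ β₂, Eff β₁ → Eff β₂ → β₁ ≠ β₂ →
        m β₁ β₂ = (∑ i, ∑ j, n i β₁ * g i j * n j β₂)
          + m β₁ (β₂ - β₁) + m (β₁ - β₂) β₂) ∧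
      -- rule (iv)
      (∀ β, Eff β →
        m β β = c β + (∑ i, ∑ j, n i β * g i j * n j β)
          - ∑ᶠ (p : (Fin r → ℤ) × (Fin r → ℤ))
              (_ : Eff p.1 ∧ Eff p.2 ∧ p.1 + p.2 = β), m p.1 p.2) := by
  classical
  set Sf : (Fin r → ℤ) → (Fin r → ℤ) → ℚ :=
    fun a b => ∑ i, ∑ j, n i a * g i j * n j b with hSf
  have hSsymm : ∀ a b, Sf a b = Sf b a := by
    intro a b
    show (∑ i, ∑ j, n i a * g i j * n j b) = ∑ i, ∑ j, n i b * g i j * n j a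
    rw [Finset.sum_comm]
    refine Finset.sum_congr rfl fun i _ => Finset.sum_congr rfl fun j _ => ?_
    rw [hg j i]; ring
  refine ⟨Meeting.mdef Sf c, ⟨Meeting.mdef_symm hSsymm, Meeting.mdef_rule2,
    fun β₁ β₂ h1 h2 hne => Meeting.mdef_rule3 β₁ β₂ h1 h2 hne,
    fun β h => Meeting.mdef_rule4 β h⟩, ?_⟩
  rintro m' ⟨_, h2', h3', h4'⟩
  exact Meeting.rules_unique Sf c m' (Meeting.mdef Sf c) h2' h3' h4'
    Meeting.mdef_rule2 (fun β₁ β₂ h1 h2 hne => Meeting.mdef_rule3 β₁ β₂ h1 h2 hne)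
    (fun β h => Meeting.mdef_rule4 β h)
end

section
/- In the setting of the meeting-invariant rules, any function m : ℤ^r × ℤ^r → ℚ satisfying rules (ii), (iii) (required for all ordered pairs of distinct nonzero effective classes) and (iv) is automatically symmetric, i.e. satisfies rule (i). (This is the paper's remark that 'rule (i) is a consequence of rules (ii–iv)'.) -/
/-- any `m : ℤ^r × ℤ^r → ℚ` satisfying rules (ii), (iii) (for all ordered
pairs of distinct nonzero effective classes) and (iv) is automatically symmetric,
i.e. satisfies rule (i). -/
theorem stmt_5 (r s : ℕ) (hr : 1 ≤ r) (hs : 1 ≤ s)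
    (g : Fin s → Fin s → ℚ) (hg : ∀ i j, g i j = g j i)
    (n : Fin s → (Fin r → ℤ) → ℚ) (c : (Fin r → ℤ) → ℚ)
    (hn : ∀ i β, ¬ Eff β → n i β = 0)
    (hc : ∀ β, ¬ Eff β → c β = 0)
    (m : (Fin r → ℤ) → (Fin r → ℤ) → ℚ)
    -- rule (ii)
    (rule2 : ∀ β₁ β₂, ¬ (Eff β₁ ∧ Eff β₂) → m β₁ β₂ = 0)
    -- rule (iii), required for all ordered pairs of distinct nonzero effective classes
    (rule3 : ∀ β₁ β₂, Eff β₁ → Eff β₂ → β₁ ≠ β₂ →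
      m β₁ β₂ = (∑ i, ∑ j, n i β₁ * g i j * n j β₂)
        + m β₁ (β₂ - β₁) + m (β₁ - β₂) β₂)
    -- rule (iv)
    (rule4 : ∀ β, Eff β →
      m β β = c β + (∑ i, ∑ j, n i β * g i j * n j β)
        - ∑ᶠ (p : (Fin r → ℤ) × (Fin r → ℤ))
            (_ : Eff p.1 ∧ Eff p.2 ∧ p.1 + p.2 = β), m p.1 p.2) :
    -- rule (i)
    ∀ β₁ β₂, m β₁ β₂ = m β₂ β₁ := by
  have hdeg : ∀ β : Fin r → ℤ, Eff β → 1 ≤ ∑ i, β i := by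
    intro β hβ
    by_contra h
    push_neg at h
    have h0 : ∑ i, β i = 0 :=
      le_antisymm (by omega) (Finset.sum_nonneg fun i _ => hβ.1 i)
    have := (Finset.sum_eq_zero_iff_of_nonneg (fun i _ => hβ.1 i)).1 h0
    exact hβ.2 (funext fun i => this i (Finset.mem_univ i))
  have gsym : ∀ β₁ β₂ : Fin r → ℤ,
      (∑ i, ∑ j, n i β₁ * g i j * n j β₂) = ∑ i, ∑ j, n i β₂ * g i j * n j β₁ := by
    intro β₁ β₂
    rw [Finset.sum_comm]
    refine Finset.sum_congr rfl fun j _ => Finset.sum_congr rfl fun i _ => ?_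
    rw [hg]; ring
  have sumsub : ∀ a b : Fin r → ℤ, ∑ i, (a - b) i = (∑ i, a i) - ∑ i, b i := by
    intro a b
    simp [Pi.sub_apply, Finset.sum_sub_distrib]
  have key : ∀ N : ℕ, ∀ β₁ β₂, Eff β₁ → Eff β₂ →
      (∑ i, β₁ i) + (∑ i, β₂ i) ≤ (N : ℤ) → m β₁ β₂ = m β₂ β₁ := by
    intro N
    induction N with
    | zero =>
      intro β₁ β₂ h₁ h₂ hle
      have := hdeg β₁ h₁; have := hdeg β₂ h₂
      simp only [Nat.cast_zero] at hle; omega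
    | succ N ih =>
      intro β₁ β₂ h₁ h₂ hle
      by_cases heq : β₁ = β₂
      · rw [heq]
      · have d1 := hdeg β₁ h₁
        have d2 := hdeg β₂ h₂
        push_cast at hle
        rw [rule3 β₁ β₂ h₁ h₂ heq, rule3 β₂ β₁ h₂ h₁ (Ne.symm heq), gsym β₁ β₂]
        have e1 : m β₁ (β₂ - β₁) = m (β₂ - β₁) β₁ := by
          by_cases h : Eff (β₂ - β₁)
          · refine (ih β₁ (β₂ - β₁) h₁ h ?_).trans rfl
            have hd := hdeg _ h
            rw [sumsub] at hd ⊢; omega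
          · rw [rule2 β₁ (β₂ - β₁) (by tauto), rule2 (β₂ - β₁) β₁ (by tauto)]
        have e2 : m (β₁ - β₂) β₂ = m β₂ (β₁ - β₂) := by
          by_cases h : Eff (β₁ - β₂)
          · refine (ih (β₁ - β₂) β₂ h h₂ ?_).trans rfl
            have hd := hdeg _ h
            rw [sumsub] at hd ⊢; omega
          · rw [rule2 (β₁ - β₂) β₂ (by tauto), rule2 β₂ (β₁ - β₂) (by tauto)]
        rw [e1, e2]; ring
  intro β₁ β₂
  by_cases h : Eff β₁ ∧ Eff β₂
  · have d1 := hdeg β₁ h.1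
    have d2 := hdeg β₂ h.2
    exact key ((∑ i, β₁ i) + ∑ i, β₂ i).toNat β₁ β₂ h.1 h.2 (by omega)
  · rw [rule2 β₁ β₂ h, rule2 β₂ β₁ (by tauto)]
end

section
/- For every integer d ≥ 1, the number of subgroups of the additive group ℤ × ℤ of index d equals σ(d) = Σ_{i|d} i. (This is the group-theoretic content of the paper's assertion that the number of automorphism-weighted, connected, degree-d, étale covers of an elliptic curve is σ(d)/d: such covers correspond to index-d subgroups of the fundamental group ℤ², each weighted by 1/d.) -/
/-!
Hermite normal form: a subgroup `H ≤ ℤ²` has the basis `(a, 0), (c, b)`, where `aℤ` is its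
intersection with the first axis, `bℤ` its projection to the second, and `c` is determined
modulo `a`. Its index is `a * b`, so the subgroups of index `d` correspond to the pairs
`a * b = d` together with a residue `c mod a`, and there are `∑_{a ∣ d} a = σ(d)` of them.
-/

open AddSubgroup

def shearResidue (a : ℕ) (c : ZMod a) : ℤ × ℤ →+ ZMod a :=
  AddMonoidHom.mk' (fun p => (p.1 : ZMod a) - c * p.2) fun p q => by
    push_cast [Prod.fst_add, Prod.snd_add]; ring

def scaleSnd (b : ℕ) : ℤ × ℤ →+ ℤ × ℤ :=
  (AddMonoidHom.id ℤ).prodMap (AddMonoidHom.mulLeft (b : ℤ))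

/-- The lattice with basis `(a, 0), (c, b)`: the pairs `(x, b v)` with `x ≡ c v (mod a)`. -/
def hermiteSubgroup (a b : ℕ) (c : ZMod a) : AddSubgroup (ℤ × ℤ) :=
  (shearResidue a c).ker.map (scaleSnd b)

lemma mem_hermiteSubgroup {a b : ℕ} {c : ZMod a} {p : ℤ × ℤ} :
    p ∈ hermiteSubgroup a b c ↔ ∃ v : ℤ, p.2 = b * v ∧ (p.1 : ZMod a) = c * v := by
  obtain ⟨x, y⟩ := p
  simp only [hermiteSubgroup, mem_map, AddMonoidHom.mem_ker, shearResidue, scaleSnd,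
    AddMonoidHom.mk'_apply, AddMonoidHom.coe_prodMap, Prod.exists, Prod.map, Prod.mk.injEq,
    sub_eq_zero]
  constructor
  · rintro ⟨x, v, hv, rfl, rfl⟩
    exact ⟨v, rfl, hv⟩
  · rintro ⟨v, rfl, hv⟩
    exact ⟨x, v, hv, rfl, rfl⟩

lemma range_scaleSnd (b : ℕ) :
    (scaleSnd b).range = (⊤ : AddSubgroup ℤ).prod (zmultiples (b : ℤ)) := by
  ext ⟨x, y⟩
  simp [scaleSnd, mem_prod, Int.mem_zmultiples_iff, dvd_def, eq_comm]

lemma index_hermiteSubgroup (a b : ℕ) (c : ZMod a) :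
    (hermiteSubgroup a b c).index = a * b := by
  have hrange : (scaleSnd b).range.index = b := by
    rw [range_scaleSnd, index_prod, index_top, Int.index_zmultiples, one_mul, Int.natAbs_natCast]
  rcases eq_or_ne b 0 with rfl | hb
  · have h := index_dvd_of_le (map_le_range (scaleSnd 0) (shearResidue a c).ker)
    rwa [hrange, Nat.zero_dvd] at h
  have hinj : Function.Injective (scaleSnd b) :=
    Function.injective_id.prodMap (mul_right_injective₀ (by exact_mod_cast hb))
  have hsurj : Function.Surjective (shearResidue a c) := fun z =>
    ⟨((z.cast : ℤ), 0), by simp [shearResidue]⟩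
  rw [hermiteSubgroup, index_map_of_injective _ hinj, hrange, index_ker,
    AddMonoidHom.range_eq_top.mpr hsurj, Nat.card_congr topEquiv.toEquiv, Nat.card_zmod]

lemma map_snd_hermiteSubgroup (a b : ℕ) (c : ZMod a) :
    (hermiteSubgroup a b c).map (AddMonoidHom.snd ℤ ℤ) = zmultiples (b : ℤ) := by
  ext y
  simp only [mem_map, mem_hermiteSubgroup, AddMonoidHom.coe_snd, Int.mem_zmultiples_iff]
  constructor
  · rintro ⟨p, ⟨v, hv, -⟩, rfl⟩
    exact ⟨v, hv⟩
  · rintro ⟨v, rfl⟩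
    exact ⟨(((c * v).cast : ℤ), b * v), ⟨v, rfl, ZMod.intCast_zmod_cast _⟩, rfl⟩

lemma comap_inl_hermiteSubgroup {a b : ℕ} (hb : b ≠ 0) (c : ZMod a) :
    (hermiteSubgroup a b c).comap (AddMonoidHom.inl ℤ ℤ) = zmultiples (a : ℤ) := by
  ext x
  simp only [mem_comap, AddMonoidHom.inl_apply, mem_hermiteSubgroup, Int.mem_zmultiples_iff,
    ← ZMod.intCast_zmod_eq_zero_iff_dvd]
  constructor
  · rintro ⟨v, hv, hx⟩
    obtain rfl : v = 0 := by simpa [hb] using hv.symm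
    simpa using hx
  · intro hx
    exact ⟨0, by simp, by simpa using hx⟩

lemma hermiteSubgroup_injective {a b : ℕ} (hb : b ≠ 0) :
    Function.Injective (hermiteSubgroup a b) := by
  intro c c' h
  have hmem : ((c.cast : ℤ), (b : ℤ)) ∈ hermiteSubgroup a b c :=
    mem_hermiteSubgroup.mpr ⟨1, by simp, by simp⟩
  obtain ⟨v, hv, hc⟩ := mem_hermiteSubgroup.mp (h ▸ hmem)
  obtain rfl : v = 1 := by simpa [hb] using hv.symm
  simpa [ZMod.intCast_zmod_cast] using hc

lemma Int.exists_addSubgroup_eq_zmultiples_natCast (K : AddSubgroup ℤ) :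
    ∃ n : ℕ, K = zmultiples (n : ℤ) := by
  obtain ⟨g, rfl⟩ := Int.subgroup_cyclic K
  exact ⟨g.natAbs, by rw [Int.zmultiples_natAbs, zmultiples_eq_closure]⟩

lemma exists_eq_hermiteSubgroup (H : AddSubgroup (ℤ × ℤ)) :
    ∃ (a b : ℕ) (c : ZMod a), H = hermiteSubgroup a b c := by
  obtain ⟨a, ha⟩ := Int.exists_addSubgroup_eq_zmultiples_natCast (H.comap (AddMonoidHom.inl ℤ ℤ))
  obtain ⟨b, hb⟩ := Int.exists_addSubgroup_eq_zmultiples_natCast (H.map (AddMonoidHom.snd ℤ ℤ))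
  obtain ⟨p, hp, hpb⟩ : (b : ℤ) ∈ H.map (AddMonoidHom.snd ℤ ℤ) := hb ▸ mem_zmultiples _
  refine ⟨a, b, p.1, ?_⟩
  ext ⟨x, y⟩
  have hmem_iff : ∀ v : ℤ, y = b * v → ((x, y) ∈ H ↔ (x : ZMod a) = p.1 * v) := by
    intro v hv
    have hxy : (x, y) = AddMonoidHom.inl ℤ ℤ (x - p.1 * v) + v • p := by
      ext <;> simp [hv, ← hpb, mul_comm]
    rw [hxy, add_mem_cancel_right (zsmul_mem hp v), ← mem_comap, ha, Int.mem_zmultiples_iff,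
      ← ZMod.intCast_zmod_eq_zero_iff_dvd, Int.cast_sub, Int.cast_mul, sub_eq_zero]
  rw [mem_hermiteSubgroup]
  constructor
  · intro h
    obtain ⟨v, hv⟩ : (b : ℤ) ∣ y := by
      rw [← Int.mem_zmultiples_iff, ← hb]
      exact mem_map_of_mem _ h
    exact ⟨v, hv, (hmem_iff v hv).mp h⟩
  · rintro ⟨v, hv, hx⟩
    exact (hmem_iff v hv).mpr hx

def hermiteSubgroupOfIndex (d : ℕ) :
    (Σ ab : d.divisorsAntidiagonal, ZMod ab.1.1) → {H : AddSubgroup (ℤ × ℤ) // H.index = d} :=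
  fun t => ⟨hermiteSubgroup t.1.1.1 t.1.1.2 t.2, by
    rw [index_hermiteSubgroup, (Nat.mem_divisorsAntidiagonal.mp t.1.2).1]⟩

lemma hermiteSubgroupOfIndex_injective (d : ℕ) :
    Function.Injective (hermiteSubgroupOfIndex d) := by
  rintro ⟨⟨⟨a, b⟩, hab⟩, c⟩ ⟨⟨⟨a', b'⟩, hab'⟩, c'⟩ h
  replace h : hermiteSubgroup a b c = hermiteSubgroup a' b' c' := congrArg Subtype.val h
  have hb : b ≠ 0 := (Nat.pos_of_mem_divisors (Nat.snd_mem_divisors_of_mem_antidiagonal hab)).ne'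
  have hb' : b' ≠ 0 := (Nat.pos_of_mem_divisors (Nat.snd_mem_divisors_of_mem_antidiagonal hab')).ne'
  obtain rfl : b = b' := by
    simpa [map_snd_hermiteSubgroup, Int.index_zmultiples] using
      congrArg (fun H => (H.map (AddMonoidHom.snd ℤ ℤ)).index) h
  obtain rfl : a = a' := by
    simpa [comap_inl_hermiteSubgroup hb, Int.index_zmultiples] using
      congrArg (fun H => (H.comap (AddMonoidHom.inl ℤ ℤ)).index) h
  obtain rfl := hermiteSubgroup_injective hb h
  rfl

lemma hermiteSubgroupOfIndex_surjective {d : ℕ} (hd : d ≠ 0) :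
    Function.Surjective (hermiteSubgroupOfIndex d) := by
  rintro ⟨H, hH⟩
  obtain ⟨a, b, c, rfl⟩ := exists_eq_hermiteSubgroup H
  rw [index_hermiteSubgroup] at hH
  exact ⟨⟨⟨(a, b), Nat.mem_divisorsAntidiagonal.mpr ⟨hH, hd⟩⟩, c⟩, rfl⟩

/-- for every `d ≥ 1`, the number of (additive) subgroups of `ℤ × ℤ` of
index `d` equals `σ(d) = Σ_{i ∣ d} i`. -/
theorem stmt_7 (d : ℕ) (hd : 1 ≤ d) :
    Nat.card {H : AddSubgroup (ℤ × ℤ) // H.index = d} = ∑ i ∈ d.divisors, i := by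
  -- makes each `ZMod t.1.1` finite, as `Nat.card_sigma` requires
  have (t : d.divisorsAntidiagonal) : NeZero t.1.1 :=
    ⟨(Nat.pos_of_mem_divisors (Nat.fst_mem_divisors_of_mem_antidiagonal t.2)).ne'⟩
  rw [← Nat.card_eq_of_bijective _ ⟨hermiteSubgroupOfIndex_injective d,
    hermiteSubgroupOfIndex_surjective (by omega)⟩, Nat.card_sigma]
  simp only [Nat.card_zmod]
  rw [Finset.sum_coe_sort d.divisorsAntidiagonal Prod.fst,
    Nat.sum_divisorsAntidiagonal fun i _ => i]
end
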